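/- Under the hypotheses that R maps Hom_H(a,b) to Hom_H(a−1,b+1), R* maps Hom_H(a,b) to Hom_H(a+1,b−1), and R*Rf = RR*f + (a−b)f on Hom_H(a,b), one has for all α, β ≥ 0 and f ∈ Hom_H(a,b): (R*)^α R^β f = Σ_{c=0}^{α} C(α,c)·(−β)_c·(b−a+β−α)_c · R^{β−c}(R*)^{α−c} f, where (x)_c is the rising factorial and terms with negative operator powers have zero coefficient. -/

import Mathlib

/-!
Induction on `α`. Iterating `R* R = R R* + (a − b)` along the grading gives
`R* R^(k+1) = R^(k+1) R* + (k+1)(a−b−k) R^k` on `Hom(a,b)`. Peeling one `R*` off `(R*)^(α+1)`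
and applying the induction hypothesis to both resulting terms (on `Hom(a+1,b−1)` and `Hom(a,b)`)
reduces the claim to a Pascal-type recurrence for the coefficients, which follows from Pascal's
rule and the absorption identity `(α+1) C(α,c) = C(α+1,c+1) (c+1)`.
-/

open Finset

/-- The rising factorial (Pochhammer symbol) `(x)_n = x(x+1)⋯(x+n−1)`. -/
def risingFac (x : ℤ) : ℕ → ℤ
  | 0 => 1
  | n + 1 => risingFac x n * (x + n)

theorem risingFac_succ (x : ℤ) (n : ℕ) : risingFac x (n + 1) = risingFac x n * (x + n) := rfl

theorem risingFac_succ_eq_mul (x : ℤ) (n : ℕ) :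
    risingFac x (n + 1) = x * risingFac (x + 1) n := by
  induction n with
  | zero => simp [risingFac]
  | succ n ih => rw [risingFac_succ, ih, risingFac_succ]; push_cast; ring

/-- The coefficient of `R^(β−c) (R*)^(α−c) f` in `(R*)^α R^β f`, for `f ∈ Hom(a,b)` and
`d = b − a`. -/
def commutationCoeff (α β : ℕ) (d : ℤ) (c : ℕ) : ℤ :=
  α.choose c * risingFac (-β) c * risingFac (d + β - α) c

@[simp]
theorem commutationCoeff_zero (α β : ℕ) (d : ℤ) : commutationCoeff α β d 0 = 1 := by
  simp [commutationCoeff, risingFac]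

theorem commutationCoeff_zero_succ (α : ℕ) (d : ℤ) (c : ℕ) :
    commutationCoeff α 0 d (c + 1) = 0 := by
  simp [commutationCoeff, risingFac_succ_eq_mul]

theorem commutationCoeff_succ_self (α β : ℕ) (d : ℤ) : commutationCoeff α β d (α + 1) = 0 := by
  simp [commutationCoeff]

theorem commutationCoeff_succ_succ (α β : ℕ) (d : ℤ) (c : ℕ) :
    commutationCoeff (α + 1) (β + 1) d (c + 1) =
      commutationCoeff α (β + 1) (d - 2) (c + 1) +
        (β + 1) * (-d - β) * commutationCoeff α β d c := by
  have pascal : ((α + 1).choose (c + 1) : ℤ) = α.choose c + α.choose (c + 1) := by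
    exact_mod_cast Nat.choose_succ_succ α c
  have absorb : ((α + 1) * α.choose c : ℤ) = (α + 1).choose (c + 1) * (c + 1) := by
    exact_mod_cast Nat.add_one_mul_choose_eq α c
  have hx : risingFac (-(β + 1 : ℕ)) (c + 1) = -(β + 1) * risingFac (-β) c := by
    rw [risingFac_succ_eq_mul]; push_cast; ring_nf
  have hy : risingFac (d + (β + 1 : ℕ) - (α + 1 : ℕ)) (c + 1) =
      risingFac (d + β - α) c * (d + β - α + c) := by
    rw [risingFac_succ]; push_cast; ring_nf
  have hy' : risingFac (d - 2 + (β + 1 : ℕ) - α) (c + 1) =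
      (d + β - α - 1) * risingFac (d + β - α) c := by
    rw [risingFac_succ_eq_mul]; push_cast; ring_nf
  simp only [commutationCoeff, hx, hy, hy']
  -- after cancelling `(β+1)(−β)_c (y)_c`, with `y = d+β−α`, this is
  -- `C(α+1,c+1)(y+c) = C(α,c+1)(y−1) + (y+α) C(α,c)`
  linear_combination (-(β + 1) * risingFac (-β) c * risingFac (d + β - α) c) *
    ((d + β - α - 1) * pascal - absorb)

theorem sum_range_succ_zsmul_eq_of_pascal {M : Type*} [AddCommGroup M] {p q r : ℕ → ℤ} {n : ℕ}
    (v : ℕ → M) (h₀ : r 0 = p 0) (hsucc : ∀ c, r (c + 1) = p (c + 1) + q c)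
    (hp : p (n + 1) = 0) :
    ∑ c ∈ range (n + 1 + 1), r c • v c =
      ∑ c ∈ range (n + 1), p c • v c + ∑ c ∈ range (n + 1), q c • v (c + 1) := by
  simp only [sum_range_succ' (fun c => r c • v c), hsucc, add_smul, sum_add_distrib, h₀]
  rw [sum_range_succ (fun c => p (c + 1) • v (c + 1)), hp, zero_smul, add_zero,
    sum_range_succ' (fun c => p c • v c)]
  abel

section Commutation

variable {K M : Type*} [Semiring K] [AddCommGroup M] [Module K M]
  {Hom : ℤ → ℤ → Submodule K M} {R Rs : Module.End K M}

theorem commutation_pow_succ_apply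
    (hR : ∀ (a b : ℤ), ∀ f ∈ Hom a b, R f ∈ Hom (a - 1) (b + 1))
    (hcomm : ∀ (a b : ℤ), ∀ f ∈ Hom a b, Rs (R f) = R (Rs f) + (a - b) • f)
    (k : ℕ) {a b : ℤ} {f : M} (hf : f ∈ Hom a b) :
    Rs ((R ^ (k + 1)) f) = (R ^ (k + 1)) (Rs f) + ((k + 1) * (a - b - k)) • (R ^ k) f := by
  induction k generalizing a b f with
  | zero => simpa using hcomm a b f hf
  | succ k ih =>
    rw [pow_succ, Module.End.mul_apply, ih (hR a b f hf), hcomm a b f hf, map_add, map_zsmul,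
      ← Module.End.mul_apply, ← pow_succ, ← Module.End.mul_apply _ R, ← pow_succ, add_assoc,
      ← add_smul]
    congr 2
    push_cast
    ring

theorem pow_apply_pow_apply_eq_sum
    (hR : ∀ (a b : ℤ), ∀ f ∈ Hom a b, R f ∈ Hom (a - 1) (b + 1))
    (hRs : ∀ (a b : ℤ), ∀ f ∈ Hom a b, Rs f ∈ Hom (a + 1) (b - 1))
    (hcomm : ∀ (a b : ℤ), ∀ f ∈ Hom a b, Rs (R f) = R (Rs f) + (a - b) • f)
    (α β : ℕ) {a b : ℤ} {f : M} (hf : f ∈ Hom a b) :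
    (Rs ^ α) ((R ^ β) f) =
      ∑ c ∈ range (α + 1), commutationCoeff α β (b - a) c • (R ^ (β - c)) ((Rs ^ (α - c)) f) := by
  induction α generalizing β a b f with
  | zero => simp
  | succ α ih =>
    cases β with
    | zero => simp [sum_range_succ' _ (α + 1), commutationCoeff_zero_succ]
    | succ k =>
      have h₁ := ih (k + 1) (hRs a b f hf)
      rw [show b - 1 - (a + 1) = b - a - 2 by ring] at h₁
      rw [pow_succ, Module.End.mul_apply, commutation_pow_succ_apply hR hcomm k hf, map_add,
        map_zsmul, h₁, ih k hf, smul_sum]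
      rw [sum_range_succ_zsmul_eq_of_pascal (fun c => (R ^ (k + 1 - c)) ((Rs ^ (α + 1 - c)) f))
        (p := commutationCoeff α (k + 1) (b - a - 2))
        (q := fun c => (k + 1) * (a - b - k) * commutationCoeff α k (b - a) c)
        (by simp) (fun c => by rw [commutationCoeff_succ_succ]; ring)
        (commutationCoeff_succ_self ..)]
      congr 1 <;> refine sum_congr rfl fun c hc => ?_
      · rw [← Module.End.mul_apply _ Rs, ← pow_succ, Nat.sub_add_comm (mem_range_succ_iff.1 hc)]
      · rw [smul_smul, Nat.add_sub_add_right, Nat.add_sub_add_right]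

end Commutation

/-- Abstract general commutation: under the same hypotheses as the iterated
commutation lemma, for all `α, β ≥ 0` and `f ∈ Hom(a,b)`:
`(R*)^α R^β f = Σ_{c=0}^{α} C(α,c)·(−β)_c·(b−a+β−α)_c · R^{β−c}(R*)^{α−c} f`
(terms with negative operator powers have zero coefficient, since
`(−β)_c = 0` for `c > β`). -/
theorem general_commutation {M : Type*} [AddCommGroup M] [Module ℂ M]
    (Hom : ℤ → ℤ → Submodule ℂ M) (R Rs : Module.End ℂ M)
    (hR : ∀ (a b : ℤ), ∀ f ∈ Hom a b, R f ∈ Hom (a - 1) (b + 1))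
    (hRs : ∀ (a b : ℤ), ∀ f ∈ Hom a b, Rs f ∈ Hom (a + 1) (b - 1))
    (hcomm : ∀ (a b : ℤ), ∀ f ∈ Hom a b, Rs (R f) = R (Rs f) + ((a - b : ℤ) : ℂ) • f) :
    ∀ (α β : ℕ) (a b : ℤ), ∀ f ∈ Hom a b,
      (Rs ^ α) ((R ^ β) f) =
        ∑ c ∈ Finset.range (α + 1),
          (((α.choose c : ℤ) * risingFac (-(β : ℤ)) c *
              risingFac (b - a + β - α) c : ℤ) : ℂ) •
            ((R ^ (β - c)) ((Rs ^ (α - c)) f)) := by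
  simp only [Int.cast_smul_eq_zsmul] at hcomm ⊢
  intro α β a b f hf
  exact pow_apply_pow_apply_eq_sum hR hRs hcomm α β hf
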